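/- Let S ⋈ G be a terminating ordered join and Z ⊆ S an upper set of the shape such that Γ₀(G_i) = 0 for all i ∈ Z. Then Γ₀(S ⋈ G) = Γ₀((S \ Z) ⋈ G), where (S \ Z) ⋈ G is the ordered join restricted to the complement of Z. -/

import Mathlib

universe u

/-- `Nimber` as in the older Mathlib: a type synonym of `Ordinal` (removed from current Mathlib). -/
def Nimber : Type (u + 1) := Ordinal.{u}

namespace Nimber
instance : Zero Nimber.{u} := ⟨(0 : Ordinal.{u})⟩
end Nimber

namespace SetTheory

/-- Pre-games, as in the older Mathlib (removed from current Mathlib). -/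
inductive PGame : Type (u + 1)
  | mk : ∀ α β : Type u, (α → PGame) → (β → PGame) → PGame

namespace PGame

def LeftMoves : PGame.{u} → Type u
  | mk l _ _ _ => l

def RightMoves : PGame.{u} → Type u
  | mk _ r _ _ => r

def moveLeft : ∀ g : PGame.{u}, LeftMoves g → PGame.{u}
  | mk _ _ L _ => L

def moveRight : ∀ g : PGame.{u}, RightMoves g → PGame.{u}
  | mk _ _ _ R => R

instance : Zero PGame.{u} := ⟨⟨PEmpty, PEmpty, PEmpty.elim, PEmpty.elim⟩⟩

def neg : PGame.{u} → PGame.{u}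
  | mk l r L R => mk r l (fun i => neg (R i)) fun i => neg (L i)

instance : Neg PGame.{u} := ⟨neg⟩

/-- The pair `(x ≤ y, x ⧏ y)`, by the classical simultaneous recursion. -/
noncomputable def leLF (x : PGame.{u}) : PGame.{u} → Prop × Prop :=
  PGame.rec (motive := fun _ => PGame.{u} → Prop × Prop)
    (fun _ _ _ _ ihL ihR y =>
      PGame.rec (motive := fun _ => Prop × Prop)
        (fun yl yr yL yR jhL jhR =>
          ((∀ i, (ihL i (mk yl yr yL yR)).2) ∧ (∀ j, (jhR j).2),
           (∃ j, (jhL j).1) ∨ (∃ i, (ihR i (mk yl yr yL yR)).1))) y) x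

instance : LE PGame.{u} := ⟨fun x y => (leLF x y).1⟩

instance : HasEquiv PGame.{u} := ⟨fun x y => x ≤ y ∧ y ≤ x⟩

noncomputable def ImpartialAux (G : PGame.{u}) : Prop :=
  PGame.rec (motive := fun _ => Prop)
    (fun l r L R ihL ihR => (mk l r L R ≈ -mk l r L R) ∧ (∀ i, ihL i) ∧ ∀ j, ihR j) G

/-- Impartial pre-games, as in the older Mathlib. -/
class Impartial (G : PGame.{u}) : Prop where
  out : ImpartialAux G

/-- The Grundy value, as in the older Mathlib: the least nimber not among the Grundy values
of the left options. -/
noncomputable def grundyValue (G : PGame.{u}) : Nimber.{u} :=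
  PGame.rec (motive := fun _ => Nimber.{u})
    (fun _ _ _ _ ihL _ => (sInf ((Set.range ihL)ᶜ : Set Ordinal.{u}) : Ordinal.{u})) G

end PGame

end SetTheory

open SetTheory PGame Nimber

noncomputable section
open Classical in
/-- The state resulting from a (Left) move in component `i₀` of an ordered join:
all components strictly above `i₀` are replaced by the empty game `0`. -/
def ojNextL {S : Type} [PartialOrder S] (x : S → PGame) (i₀ : S) (j : (x i₀).LeftMoves) :
    S → PGame :=
  fun i => if i = i₀ then (x i₀).moveLeft j else if i₀ < i then 0 else x i

open Classical in
def ojNextR {S : Type} [PartialOrder S] (x : S → PGame) (i₀ : S) (j : (x i₀).RightMoves) :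
    S → PGame :=
  fun i => if i = i₀ then (x i₀).moveRight j else if i₀ < i then 0 else x i

/-- The move relation of the ordered join: `OJRel y x` iff `y` results from `x` by a single move. -/
def OJRel {S : Type} [PartialOrder S] (y x : S → PGame) : Prop :=
  (∃ i₀ j, y = ojNextL x i₀ j) ∨ (∃ i₀ j, y = ojNextR x i₀ j)

theorem ojrel_L {S : Type} [PartialOrder S] (x : S → PGame) (i₀ : S) (j : (x i₀).LeftMoves) :
    OJRel (ojNextL x i₀ j) x := Or.inl ⟨i₀, j, rfl⟩

theorem ojrel_R {S : Type} [PartialOrder S] (x : S → PGame) (i₀ : S) (j : (x i₀).RightMoves) :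
    OJRel (ojNextR x i₀ j) x := Or.inr ⟨i₀, j, rfl⟩

/-- The ordered join of a family of games, as a game, given a termination certificate. -/
def ojoinAcc {S : Type} [PartialOrder S] : ∀ x : S → PGame, Acc OJRel x → PGame := fun x h =>
  Acc.rec (motive := fun x _ => PGame)
    (fun x _ ih =>
      PGame.mk (Σ i₀ : S, (x i₀).LeftMoves) (Σ i₀ : S, (x i₀).RightMoves)
        (fun p => ih _ (ojrel_L x p.1 p.2))
        (fun p => ih _ (ojrel_R x p.1 p.2))) h

open Classical in
/-- The ordered join `S ⋈ G` of a family of games `G` over the poset `S`.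
(Defined as `0` in the degenerate non-terminating case.) -/
def ojoin {S : Type} [PartialOrder S] (x : S → PGame) : PGame :=
  if h : Acc OJRel x then ojoinAcc x h else 0

/-- The Grundy set `Γ₁(G)`: the set of Grundy numbers of the options of `G`. -/
def grundySet (G : PGame) : Set Nimber :=
  Set.range fun i => grundyValue (G.moveLeft i)
end

namespace Nimber

noncomputable instance : LinearOrder Nimber.{u} := inferInstanceAs (LinearOrder Ordinal.{u})

theorem pos_of_ne_zero {a : Nimber.{u}} (h : a ≠ 0) : 0 < a :=
  (pos_iff_ne_zero (α := Ordinal.{u})).2 h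

end Nimber

namespace SetTheory.PGame

theorem grundyValue_zero : grundyValue (0 : PGame.{u}) = 0 :=
  le_antisymm (csInf_le' (α := Ordinal.{u}) fun ⟨i, _⟩ => PEmpty.elim i)
    (zero_le (α := Ordinal.{u}))

theorem grundyValue_moveLeft_ne {G : PGame.{u}} (i : G.LeftMoves) :
    grundyValue (G.moveLeft i) ≠ grundyValue G := by
  cases G with
  | mk l r L R =>
    have hmex := csInf_mem (α := Ordinal.{u})
      (s := (Set.range fun i => (grundyValue (L i) : Ordinal.{u}))ᶜ)
      (Set.nonempty_compl.2 fun h => not_surjective_of_ordinal _ (Set.range_eq_univ.1 h))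
    exact fun h => hmex ⟨i, h⟩

theorem grundyValue_le_of_forall_moveLeft_ne {G : PGame.{u}} {o : Nimber.{u}}
    (h : ∀ i, grundyValue (G.moveLeft i) ≠ o) : grundyValue G ≤ o := by
  cases G with
  | mk l r L R => exact csInf_le' (α := Ordinal.{u}) fun ⟨i, hi⟩ => h i hi

theorem exists_grundyValue_moveLeft_of_lt {G : PGame.{u}} {o : Nimber.{u}}
    (h : o < grundyValue G) : ∃ i, grundyValue (G.moveLeft i) = o := by
  by_contra! hne
  exact (grundyValue_le_of_forall_moveLeft_ne hne).not_gt h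

theorem grundyValue_eq_of_forall_moveLeft {G : PGame.{u}} {o : Nimber.{u}}
    (hne : ∀ i, grundyValue (G.moveLeft i) ≠ o)
    (hlt : ∀ o' < o, ∃ i, grundyValue (G.moveLeft i) = o') : grundyValue G = o := by
  refine le_antisymm (grundyValue_le_of_forall_moveLeft_ne hne) (not_lt.1 fun h => ?_)
  obtain ⟨i, hi⟩ := hlt _ h
  exact grundyValue_moveLeft_ne i hi

theorem exists_grundyValue_moveLeft_eq_zero {G : PGame.{u}} (h : grundyValue G ≠ 0) :
    ∃ i, grundyValue (G.moveLeft i) = 0 :=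
  exists_grundyValue_moveLeft_of_lt (Nimber.pos_of_ne_zero h)

end SetTheory.PGame

section OrderedJoin

variable {S : Type} [PartialOrder S]

open Classical in
noncomputable def ojUpdate (x : S → PGame) (i₀ : S) (g : PGame) : S → PGame :=
  fun i => if i = i₀ then g else if i₀ < i then 0 else x i

theorem ojNextL_eq_ojUpdate (x : S → PGame) (i₀ : S) (j : (x i₀).LeftMoves) :
    ojNextL x i₀ j = ojUpdate x i₀ ((x i₀).moveLeft j) :=
  rfl

theorem ojNextR_eq_ojUpdate (x : S → PGame) (i₀ : S) (j : (x i₀).RightMoves) :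
    ojNextR x i₀ j = ojUpdate x i₀ ((x i₀).moveRight j) :=
  rfl

@[simp]
theorem ojUpdate_self (x : S → PGame) (i₀ : S) (g : PGame) : ojUpdate x i₀ g i₀ = g := by
  simp [ojUpdate]

@[simp]
theorem ojUpdate_ojUpdate (x : S → PGame) (i₀ : S) (g g' : PGame) :
    ojUpdate (ojUpdate x i₀ g) i₀ g' = ojUpdate x i₀ g' := by
  funext i
  unfold ojUpdate
  split_ifs <;> simp_all

theorem ojUpdate_restrict (s : Set S) (x : S → PGame) (i₀ : s) (g : PGame) :
    (fun i : s => ojUpdate x i₀ g i) = ojUpdate (fun i : s => x i) i₀ g := by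
  funext i
  unfold ojUpdate
  split_ifs <;> simp_all [Subtype.ext_iff]

theorem ojUpdate_restrict_compl {Z : Set S} (hZ : IsUpperSet Z) (x : S → PGame) {i₀ : S}
    (hi₀ : i₀ ∈ Z) (g : PGame) : (fun i : ↥Zᶜ => ojUpdate x i₀ g i) = fun i : ↥Zᶜ => x i := by
  funext i
  have hne : (i : S) ≠ i₀ := fun h => i.2 (h ▸ hi₀)
  have hnlt : ¬ i₀ < i := fun h => i.2 (hZ h.le hi₀)
  simp [ojUpdate, hne, hnlt]

theorem grundyValue_ojUpdate_eq_zero {Z : Set S} {x : S → PGame}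
    (h0 : ∀ i ∈ Z, grundyValue (x i) = 0) {i₀ : S} {g : PGame}
    (hg : i₀ ∈ Z → grundyValue g = 0) : ∀ i ∈ Z, grundyValue (ojUpdate x i₀ g i) = 0 := by
  intro i hi
  by_cases h : i = i₀
  · subst h; simpa using hg hi
  · by_cases hlt : i₀ < i <;> simp [ojUpdate, h, hlt, grundyValue_zero, h0 i hi]

theorem acc_ojRel_restrict (s : Set S) {x : S → PGame} (hx : Acc OJRel x) :
    Acc OJRel (fun i : s => x i) := by
  induction hx with
  | intro x _ ih =>
    constructor
    rintro y (⟨i₀, j, rfl⟩ | ⟨i₀, j, rfl⟩)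
    · simpa only [ojNextL_eq_ojUpdate, ojUpdate_restrict] using ih _ (ojrel_L x i₀ j)
    · simpa only [ojNextR_eq_ojUpdate, ojUpdate_restrict] using ih _ (ojrel_R x i₀ j)

theorem ojoin_eq_mk {x : S → PGame} (hx : Acc OJRel x) :
    ojoin x = PGame.mk (Σ i₀ : S, (x i₀).LeftMoves) (Σ i₀ : S, (x i₀).RightMoves)
      (fun p => ojoin (ojNextL x p.1 p.2)) (fun p => ojoin (ojNextR x p.1 p.2)) := by
  obtain ⟨_, hx⟩ := hx
  simp only [ojoin, dif_pos (Acc.intro x hx), dif_pos (hx _ (ojrel_L x _ _)),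
    dif_pos (hx _ (ojrel_R x _ _))]
  rfl

theorem grundyValue_ojoin_ojNextL_ne {x : S → PGame} (hx : Acc OJRel x) (i₀ : S)
    (j : (x i₀).LeftMoves) : grundyValue (ojoin (ojNextL x i₀ j)) ≠ grundyValue (ojoin x) := by
  rw [ojoin_eq_mk hx]
  exact grundyValue_moveLeft_ne
    (G := PGame.mk _ _ (fun p : Σ i, (x i).LeftMoves => ojoin (ojNextL x p.1 p.2)) _) ⟨i₀, j⟩

theorem exists_grundyValue_ojoin_ojNextL_of_lt {x : S → PGame} (hx : Acc OJRel x)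
    {o : Nimber} (h : o < grundyValue (ojoin x)) :
    ∃ i₀ j, grundyValue (ojoin (ojNextL x i₀ j)) = o := by
  rw [ojoin_eq_mk hx] at h
  obtain ⟨⟨i₀, j⟩, hj⟩ := exists_grundyValue_moveLeft_of_lt h
  exact ⟨i₀, j, hj⟩

theorem grundyValue_ojoin_eq_of {x : S → PGame} (hx : Acc OJRel x) {o : Nimber}
    (hne : ∀ i₀ j, grundyValue (ojoin (ojNextL x i₀ j)) ≠ o)
    (hlt : ∀ o' < o, ∃ i₀ j, grundyValue (ojoin (ojNextL x i₀ j)) = o') :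
    grundyValue (ojoin x) = o := by
  rw [ojoin_eq_mk hx]
  refine grundyValue_eq_of_forall_moveLeft (fun p => hne p.1 p.2) fun o' ho' => ?_
  obtain ⟨i₀, j, hj⟩ := hlt o' ho'
  exact ⟨⟨i₀, j⟩, hj⟩

/- Moves outside `Z` are moves of the restricted join. A move into `Z` (component `i₀`, of
value `0` before) leaves a nonzero value there, so it can be answered in the same component by a
move back to value `0`; being in the upper set `Z`, the two moves do not touch `Zᶜ`, hence the
reply has the value of the restricted join and the move itself cannot. The reply is two moves
deep, which is why the induction runs along `TransGen OJRel`. -/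
theorem grundyValue_ojoin_restrict_compl {Z : Set S} (hZ : IsUpperSet Z) {x : S → PGame}
    (hx : Acc (Relation.TransGen OJRel) x) (h0 : ∀ i ∈ Z, grundyValue (x i) = 0) :
    grundyValue (ojoin x) = grundyValue (ojoin fun i : ↥Zᶜ => x i) := by
  induction hx with
  | intro x hacc ih =>
    have hx : Acc OJRel x := Subrelation.accessible .single (Acc.intro x hacc)
    have hxr := acc_ojRel_restrict Zᶜ hx
    have outside (i₀ : S) (hi₀ : i₀ ∉ Z) (j : (x i₀).LeftMoves) :
        grundyValue (ojoin (ojNextL x i₀ j)) =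
          grundyValue (ojoin (ojNextL (fun i : ↥Zᶜ => x i) ⟨i₀, hi₀⟩ j)) := by
      rw [ih _ (.single (ojrel_L x i₀ j)) (grundyValue_ojUpdate_eq_zero h0 (absurd · hi₀)),
        ojNextL_eq_ojUpdate, ojUpdate_restrict Zᶜ x ⟨i₀, hi₀⟩]
      rfl
    refine grundyValue_ojoin_eq_of hx (fun i₀ j => ?_) fun o ho => ?_
    · by_cases hi₀ : i₀ ∈ Z
      · set y := ojNextL x i₀ j
        have hy : grundyValue (y i₀) ≠ 0 := by
          simpa [y, ojNextL_eq_ojUpdate, ← h0 i₀ hi₀] using grundyValue_moveLeft_ne j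
        obtain ⟨j', hj'⟩ := exists_grundyValue_moveLeft_eq_zero hy
        have hreply : ojNextL y i₀ j' = ojUpdate x i₀ ((y i₀).moveLeft j') :=
          ojUpdate_ojUpdate x i₀ _ _
        have hval : grundyValue (ojoin (ojNextL y i₀ j')) =
            grundyValue (ojoin fun i : ↥Zᶜ => x i) := by
          rw [ih _ (.head (ojrel_L y i₀ j') (.single (ojrel_L x i₀ j)))
              (hreply ▸ grundyValue_ojUpdate_eq_zero h0 fun _ => hj'),
            hreply, ojUpdate_restrict_compl hZ x hi₀]
        exact fun h =>
          grundyValue_ojoin_ojNextL_ne (hx.inv (ojrel_L x i₀ j)) i₀ j' (hval.trans h.symm)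
      · rw [outside i₀ hi₀ j]
        exact grundyValue_ojoin_ojNextL_ne hxr ⟨i₀, hi₀⟩ j
    · obtain ⟨i₀, j, hj⟩ := exists_grundyValue_ojoin_ojNextL_of_lt hxr ho
      exact ⟨i₀, j, (outside i₀ i₀.2 j).trans hj⟩

end OrderedJoin

theorem ojoin_zero_upper_set_general {S : Type} [PartialOrder S] (G : S → PGame)
    (hG : Acc OJRel G)
    (Z : Set S) (hZ : IsUpperSet Z) (h0 : ∀ i ∈ Z, grundyValue (G i) = 0) :
    grundyValue (ojoin G) = grundyValue (ojoin fun i : ↥Zᶜ => G i) :=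
  grundyValue_ojoin_restrict_compl hZ hG.transGen h0

/-- zero upper sets: if `Z ⊆ S` is an upper set with `Γ₀(G i) = 0` for all
`i ∈ Z`, then `Γ₀(S ⋈ G) = Γ₀((S \ Z) ⋈ G)`. -/
theorem ojoin_zero_upper_set {S : Type} [PartialOrder S] (G : S → PGame)
    (hI : ∀ i, (G i).Impartial) (hG : Acc OJRel G)
    (Z : Set S) (hZ : IsUpperSet Z) (h0 : ∀ i ∈ Z, grundyValue (G i) = 0) :
    grundyValue (ojoin G) = grundyValue (ojoin fun i : ↥Zᶜ => G i) :=
  ojoin_zero_upper_set_general G hG Z hZ h0
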